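/- In the random network 𝒢_n, for any two disjoint subsets B, C ⊂ [n] and any d > 0, the expected number of ordered pairs (i,j) ∈ B × C with shortest-path distance D(i,j) ≤ d is at most #B · #C · e^d / (n−1). -/

import Mathlib

/-!
If `D(i, j) ≤ d`, some self-avoiding path from `i` to `j`, with `k` edges say, has length
at most `d`. Its `k` edges are distinct, so their lengths are independent Exponential(`1/n`),
and by induction on `k` (integrating against the exponential density, which is at most `1/n`)
their sum is at most `d` with probability at most `(d/n)^k / k!`. There are at most `n^(k-1)`
such paths, so a union bound gives
`P(D(i, j) ≤ d) ≤ ∑ₖ n^(k-1) (d/n)^k / k! ≤ (e^d - 1)/n ≤ e^d/(n - 1)`,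
and linearity of expectation over `B × C` finishes the proof.
-/

open MeasureTheory ProbabilityTheory Filter Real Set
open scoped ENNReal Classical

noncomputable section

namespace EdgeFlows

/-- A configuration of edge lengths on the complete graph with vertex set `Fin n`. -/
abbrev Config (n : ℕ) := Fin n → Fin n → ℝ

/-- The length of a list of vertices viewed as a walk, for an edge-weight function `w`. -/
def listLen {V : Type*} (w : V → V → ℝ) (p : List V) : ℝ :=
  ((p.zip p.tail).map fun q => w q.1 q.2).sum

/-- `p` is a (self-avoiding) path from `i` to `j`. -/
def IsPath {V : Type*} (p : List V) (i j : V) : Prop :=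
  p.Nodup ∧ p.head? = some i ∧ p.getLast? = some j

/-- The shortest-path distance `D(i,j)` in the network with edge lengths `ℓ`. -/
def netDist {n : ℕ} (ℓ : Config n) (i j : Fin n) : ℝ :=
  sInf {x | ∃ p : List (Fin n), IsPath p i j ∧ listLen ℓ p = x}

/-- The directed edge `(a,b)` lies on a shortest path from `i` to `j`
(with probability one the shortest path is unique, so this says that the shortest
path `π(i,j)` traverses `(a,b)` in this direction). -/
def OnShortestPath {n : ℕ} (ℓ : Config n) (i j a b : Fin n) : Prop :=
  ∃ p : List (Fin n), IsPath p i j ∧ listLen ℓ p = netDist ℓ i j ∧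
    (a, b) ∈ p.zip p.tail

/-- The flow `F_n(e)` across the directed edge `e = (a,b)`: a flow of volume `1/n` is routed
along the shortest path between every ordered pair of distinct vertices. -/
def flow (n : ℕ) (ℓ : Config n) (a b : Fin n) : ℝ :=
  ((Finset.univ.filter fun ij : Fin n × Fin n =>
      ij.1 ≠ ij.2 ∧ OnShortestPath ℓ ij.1 ij.2 a b).card : ℝ) / n

/-- `μ` is the law of the random network `𝒢_n`: the edge lengths `L_{ij} = L_{ji}`
are independent Exponential(rate `1/n`) random variables. -/
def IsEdgeLaw (n : ℕ) (μ : Measure (Config n)) : Prop :=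
  IsProbabilityMeasure μ ∧
  (∀ᵐ ℓ ∂μ, ∀ i j, ℓ i j = ℓ j i) ∧
  iIndepFun
    (fun (e : {p : Fin n × Fin n // p.1 < p.2}) (ℓ : Config n) => ℓ e.1.1 e.1.2) μ ∧
  (∀ e : {p : Fin n × Fin n // p.1 < p.2},
    μ.map (fun ℓ : Config n => ℓ e.1.1 e.1.2) = expMeasure (1 / n))

/-- `G(z) = ∫₀^∞ P(W₁ W₂ e^{-u} > z) du` where `W₁, W₂` are independent Exponential(1). -/
def Gfun (z : ℝ) : ℝ :=
  ∫ u in Set.Ioi (0:ℝ),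
    (((expMeasure 1).prod (expMeasure 1)) {w : ℝ × ℝ | z < w.1 * w.2 * Real.exp (-u)}).toReal

open scoped Nat

section Erlang

/-- `(r d)^k / k!` bounds `P(E₁ + ⋯ + Eₖ ≤ d)` for i.i.d. `Eᵢ ~ Exp(r)`; the value `0` at
`d < 0` is what lets the induction on `k` go through. -/
def erlangCDFBound (r : ℝ) (k : ℕ) (d : ℝ) : ℝ≥0∞ :=
  if 0 ≤ d then ENNReal.ofReal ((r * d) ^ k / k !) else 0

lemma integral_Icc_mul_erlang {r d : ℝ} (hd : 0 ≤ d) (k : ℕ) :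
    ∫ x in Icc 0 d, r * ((r * (d - x)) ^ k / k !) = (r * d) ^ (k + 1) / (k + 1)! := by
  rw [integral_Icc_eq_integral_Ioc, ← intervalIntegral.integral_of_le hd,
    intervalIntegral.integral_eq_sub_of_hasDerivAt
      (f := fun x => -(r * (d - x)) ^ (k + 1) / (k + 1)!)]
  · simp [neg_div]
  · intro x _
    refine ((((hasDerivAt_id x).const_sub d).const_mul r).pow (k + 1)).neg.div_const
      ((k + 1)! : ℝ) |>.congr_deriv ?_
    push_cast [Nat.factorial_succ, id]
    field_simp
  · exact (by fun_prop : Continuous _).intervalIntegrable _ _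

lemma lintegral_erlangCDFBound_sub_le {r : ℝ} (hr : 0 ≤ r) (k : ℕ) (d : ℝ) :
    ∫⁻ x, erlangCDFBound r k (d - x) ∂expMeasure r ≤ erlangCDFBound r (k + 1) d := by
  have hpdf (x : ℝ) : exponentialPDF r x * erlangCDFBound r k (d - x) ≤
      (Icc 0 d).indicator (fun x => ENNReal.ofReal (r * ((r * (d - x)) ^ k / k !))) x := by
    rcases lt_or_ge x 0 with hx | hx
    · simp [exponentialPDF_of_neg hx]
    rcases lt_or_ge d x with hdx | hdx
    · simp [erlangCDFBound, hdx]
    rw [indicator_of_mem (mem_Icc.2 ⟨hx, hdx⟩), erlangCDFBound, if_pos (sub_nonneg.2 hdx),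
      exponentialPDF_of_nonneg hx, ← ENNReal.ofReal_mul (by positivity)]
    gcongr
    exact mul_le_of_le_one_right hr (exp_le_one_iff.2 (by nlinarith))
  calc ∫⁻ x, erlangCDFBound r k (d - x) ∂expMeasure r
      ≤ ∫⁻ x, exponentialPDF r x * erlangCDFBound r k (d - x) :=
        lintegral_withDensity_le_lintegral_mul _ (measurable_exponentialPDFReal r).ennreal_ofReal _
    _ ≤ ∫⁻ x in Icc 0 d, ENNReal.ofReal (r * ((r * (d - x)) ^ k / k !)) := by
        rw [← lintegral_indicator measurableSet_Icc]
        exact lintegral_mono hpdf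
    _ ≤ erlangCDFBound r (k + 1) d := by
        rcases lt_or_ge d 0 with hd | hd
        · simp [Icc_eq_empty_of_lt hd]
        rw [erlangCDFBound, if_pos hd, ← integral_Icc_mul_erlang hd,
          ofReal_integral_eq_lintegral_ofReal]
        · exact (by fun_prop : Continuous _).integrableOn_Icc
        · filter_upwards [ae_restrict_mem measurableSet_Icc] with x hx
          have : 0 ≤ d - x := sub_nonneg.2 hx.2
          positivity

variable {Ω ι : Type*} [MeasurableSpace Ω] {μ : Measure Ω} [IsProbabilityMeasure μ]
  {X : ι → Ω → ℝ} {r : ℝ}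

lemma measure_sum_le_erlangCDFBound (hX : ∀ i, Measurable (X i)) (hind : iIndepFun X μ)
    (hr : 0 ≤ r) (hlaw : ∀ i, μ.map (X i) = expMeasure r) (s : Finset ι) (d : ℝ) :
    μ {ω | ∑ i ∈ s, X i ω ≤ d} ≤ erlangCDFBound r s.card d := by
  induction s using Finset.induction_on generalizing d with
  | empty => by_cases hd : 0 ≤ d <;> simp [erlangCDFBound, hd]
  | insert i s hi ih =>
    let S ω := ∑ j ∈ s, X j ω
    have hS : Measurable S := Finset.measurable_sum s fun j _ => hX j
    have hpair : μ.map (fun ω => (X i ω, S ω)) = (expMeasure r).prod (μ.map S) := by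
      rw [← hlaw i]
      refine (indepFun_iff_map_prod_eq_prod_map_map (hX i).aemeasurable hS.aemeasurable).1 ?_
      simpa [S, Finset.sum_fn] using (hind.indepFun_finsetSum_of_notMem hX hi).symm
    have hA : MeasurableSet {p : ℝ × ℝ | p.1 + p.2 ≤ d} :=
      measurableSet_le (by fun_prop) measurable_const
    calc μ {ω | ∑ j ∈ insert i s, X j ω ≤ d}
        = (expMeasure r).prod (μ.map S) {p | p.1 + p.2 ≤ d} := by
          rw [← hpair, Measure.map_apply ((hX i).prodMk hS) hA]
          simp [S, Finset.sum_insert hi]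
      _ = ∫⁻ x, μ {ω | S ω ≤ d - x} ∂expMeasure r := by
          rw [Measure.prod_apply hA]
          refine lintegral_congr fun x => ?_
          rw [Measure.map_apply hS (measurable_prodMk_left hA)]
          simp [le_sub_iff_add_le']
      _ ≤ ∫⁻ x, erlangCDFBound r s.card (d - x) ∂expMeasure r :=
          lintegral_mono fun x => ih _
      _ ≤ erlangCDFBound r (insert i s).card d := by
          rw [Finset.card_insert_of_notMem hi]
          exact lintegral_erlangCDFBound_sub_le hr _ _

end Erlang

lemma integral_card_filter {Ω α : Type*} [MeasurableSpace Ω] {μ : Measure Ω}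
    [IsFiniteMeasure μ] (s : Finset α) {P : α → Ω → Prop} [∀ a ω, Decidable (P a ω)]
    (hP : ∀ a ∈ s, MeasurableSet {ω | P a ω}) :
    ∫ ω, ((s.filter fun a => P a ω).card : ℝ) ∂μ = ∑ a ∈ s, μ.real {ω | P a ω} := by
  have hind (ω : Ω) :
      ((s.filter fun a => P a ω).card : ℝ) = ∑ a ∈ s, {ω | P a ω}.indicator 1 ω := by
    simp only [Set.indicator_apply, Set.mem_ofPred_eq, Pi.one_apply, Finset.sum_boole]
  simp_rw [hind]
  rw [integral_finsetSum _ fun a ha => (integrable_const 1).indicator (hP a ha)]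
  exact Finset.sum_congr rfl fun a ha => integral_indicator_one (hP a ha)

lemma measurable_listLen {V : Type*} (p : List V) :
    Measurable fun w : V → V → ℝ => listLen w p := by
  simpa [listLen, List.map_map, Function.comp_def] using
    List.measurable_fun_sum ((p.zip p.tail).map fun q (w : V → V → ℝ) => w q.1 q.2) <| by
      simp only [List.mem_map]
      rintro _ ⟨q, -, rfl⟩
      fun_prop

section Paths
variable {n : ℕ}

def sortPair (q : Fin n × Fin n) : Fin n × Fin n := (min q.1 q.2, max q.1 q.2)

lemma apply_sortPair {ℓ : Config n} (hsym : ∀ a b, ℓ a b = ℓ b a) (q : Fin n × Fin n) :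
    ℓ (sortPair q).1 (sortPair q).2 = ℓ q.1 q.2 := by
  rcases le_total q.1 q.2 with h | h <;> simp [sortPair, h, hsym q.1]

lemma ne_of_mem_zip_tail : ∀ {p : List (Fin n)}, p.Nodup → ∀ q ∈ p.zip p.tail, q.1 ≠ q.2
  | a :: b :: t, hp, q, hq => by
      rcases List.mem_cons.1 hq with rfl | hq
      · exact fun hab => (List.nodup_cons.1 hp).1 (by simp [show a = b from hab])
      · exact ne_of_mem_zip_tail (List.nodup_cons.1 hp).2 q hq

lemma nodup_map_sortPair_zip_tail : ∀ {p : List (Fin n)}, p.Nodup →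
    ((p.zip p.tail).map sortPair).Nodup
  | [], _ | [_], _ => by simp
  | a :: b :: t, hp => by
      obtain ⟨ha, ht⟩ := List.nodup_cons.1 hp
      refine List.nodup_cons.2 ⟨fun hmem => ha ?_, nodup_map_sortPair_zip_tail ht⟩
      obtain ⟨q, hq, hqa⟩ := List.mem_map.1 hmem
      obtain ⟨hq₁, hq₂⟩ := List.of_mem_zip hq
      have hmin : min q.1 q.2 ∈ b :: t := by
        rcases min_choice q.1 q.2 with h | h <;> rw [h]
        exacts [hq₁, List.mem_cons_of_mem _ hq₂]
      have hmax : max q.1 q.2 ∈ b :: t := by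
        rcases max_choice q.1 q.2 with h | h <;> rw [h]
        exacts [hq₁, List.mem_cons_of_mem _ hq₂]
      simp only [sortPair, Prod.mk.injEq] at hqa
      rcases le_total a b with hab | hab
      · rwa [hqa.1, min_eq_left hab] at hmin
      · rwa [hqa.2, max_eq_left hab] at hmax

lemma lt_of_mem_map_sortPair {p : List (Fin n)} (hp : p.Nodup) :
    ∀ q ∈ (p.zip p.tail).map sortPair, q.1 < q.2 := by
  simp only [List.mem_map, forall_exists_index, and_imp, forall_apply_eq_imp_iff₂]
  exact fun q hq => min_lt_max.2 (ne_of_mem_zip_tail hp q hq)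

def pathEdges (p : List (Fin n)) : Finset {q : Fin n × Fin n // q.1 < q.2} :=
  ((p.zip p.tail).map sortPair).toFinset.subtype fun q => q.1 < q.2

lemma listLen_eq_sum_pathEdges {ℓ : Config n} (hsym : ∀ a b, ℓ a b = ℓ b a)
    {p : List (Fin n)} (hp : p.Nodup) : listLen ℓ p = ∑ e ∈ pathEdges p, ℓ e.1.1 e.1.2 := by
  rw [pathEdges, Finset.sum_subtype_of_mem (fun q : Fin n × Fin n => ℓ q.1 q.2)
      (by simpa using lt_of_mem_map_sortPair hp),
    List.sum_toFinset _ (nodup_map_sortPair_zip_tail hp), List.map_map, listLen]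
  congr 1
  exact List.map_congr_left fun q _ => (apply_sortPair hsym q).symm

lemma card_pathEdges {p : List (Fin n)} (hp : p.Nodup) : (pathEdges p).card = p.length - 1 := by
  rw [pathEdges, Finset.card_subtype,
    Finset.filter_true_of_mem (by simpa using lt_of_mem_map_sortPair hp),
    List.toFinset_card_of_nodup (nodup_map_sortPair_zip_tail hp)]
  simp

variable {i j : Fin n} {p : List (Fin n)}

lemma finite_setOf_isPath (i j : Fin n) : {p : List (Fin n) | IsPath p i j}.Finite :=
  (List.finite_length_le (Fin n) n).subset fun p hp => by simpa using hp.1.length_le_card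

def paths (i j : Fin n) : Finset (List (Fin n)) := (finite_setOf_isPath i j).toFinset

lemma mem_paths : p ∈ paths i j ↔ IsPath p i j := Set.Finite.mem_toFinset _

lemma IsPath.length_le (hp : IsPath p i j) : p.length ≤ n := by
  simpa using hp.1.length_le_card

lemma IsPath.eq_cons_append (hp : IsPath p i j) (hij : i ≠ j) :
    p = i :: (p.tail.dropLast ++ [j]) := by
  obtain ⟨t, rfl⟩ := List.head?_eq_some_iff.1 hp.2.1
  have ht : t.getLast? = some j := by
    cases t with
    | nil => exact absurd (by simpa [IsPath] using hp.2.2) hij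
    | cons a t => simpa [List.getLast?_cons_cons] using hp.2.2
  obtain ⟨m, rfl⟩ := List.getLast?_eq_some_iff.1 ht
  simp

lemma IsPath.two_le_length (hp : IsPath p i j) (hij : i ≠ j) : 2 ≤ p.length := by
  rw [hp.eq_cons_append hij]
  simp

lemma netDist_le_iff (ℓ : Config n) (hij : i ≠ j) {d : ℝ} :
    netDist ℓ i j ≤ d ↔ ∃ p ∈ paths i j, listLen ℓ p ≤ d := by
  have hfin : {x | ∃ p, IsPath p i j ∧ listLen ℓ p = x}.Finite :=
    ((finite_setOf_isPath i j).image (listLen ℓ)).subset fun x ⟨p, hp, hx⟩ => ⟨p, hp, hx⟩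
  have hne : {x | ∃ p, IsPath p i j ∧ listLen ℓ p = x}.Nonempty :=
    ⟨_, [i, j], ⟨by simp [hij], rfl, rfl⟩, rfl⟩
  simp only [mem_paths]
  constructor
  · intro h
    obtain ⟨p, hp, hx⟩ := hne.csInf_mem hfin
    exact ⟨p, hp, hx ▸ h⟩
  · rintro ⟨p, hp, hle⟩
    exact (csInf_le hfin.bddBelow ⟨p, hp, rfl⟩).trans hle

lemma card_paths_filter_length_le (hij : i ≠ j) (k : ℕ) :
    ((paths i j).filter fun p => p.length - 1 = k).card ≤ n ^ (k - 1) := by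
  let interiors := (Finset.univ : Finset (List.Vector (Fin n) (k - 1))).image List.Vector.toList
  calc ((paths i j).filter fun p => p.length - 1 = k).card
      ≤ interiors.card := by
        refine Finset.card_le_card_of_injOn (fun p => p.tail.dropLast) ?_ ?_
        · intro p hp
          obtain ⟨hp, hk⟩ := Finset.mem_filter.1 hp
          have := (mem_paths.1 hp).two_le_length hij
          exact Finset.mem_image.2
            ⟨(⟨_, by simp; omega⟩ : List.Vector (Fin n) (k - 1)), Finset.mem_univ _, rfl⟩
        · intro p hp p' hp' h
          rw [(mem_paths.1 (Finset.mem_filter.1 hp).1).eq_cons_append hij,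
            (mem_paths.1 (Finset.mem_filter.1 hp').1).eq_cons_append hij]
          exact congrArg (fun m => i :: (m ++ [j])) h
    _ ≤ n ^ (k - 1) := Finset.card_image_le.trans (by simp [card_vector])

lemma sum_paths_le (hij : i ≠ j) {d : ℝ} (hd : 0 ≤ d) :
    ∑ p ∈ paths i j, (d / n) ^ (p.length - 1) / (p.length - 1)! ≤ (exp d - 1) / n := by
  have hn : (n : ℝ) ≠ 0 := by have := i.pos; positivity
  have hmaps : ∀ p ∈ paths i j, p.length - 1 ∈ Finset.Ioc 0 n := by
    intro p hp
    have := (mem_paths.1 hp).two_le_length hij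
    have := (mem_paths.1 hp).length_le
    simp only [Finset.mem_Ioc]
    omega
  have hfiber (k : ℕ) (hk : k ∈ Finset.Ioc 0 n) :
      ∑ p ∈ paths i j with p.length - 1 = k, (d / n) ^ (p.length - 1) / (p.length - 1)!
        ≤ d ^ k / k ! / n := by
    rw [Finset.sum_congr rfl fun p hp => by rw [(Finset.mem_filter.1 hp).2], Finset.sum_const,
      nsmul_eq_mul]
    calc _ ≤ (n : ℝ) ^ (k - 1) * ((d / n) ^ k / k !) := by
          gcongr
          exact_mod_cast card_paths_filter_length_le hij k
      _ = d ^ k / k ! / n := by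
          obtain ⟨k, rfl⟩ := Nat.exists_eq_add_one.2 (Finset.mem_Ioc.1 hk).1
          rw [Nat.add_sub_cancel, div_pow]
          field_simp
          ring
  have hexp : ∑ k ∈ Finset.Ioc 0 n, d ^ k / k ! ≤ exp d - 1 := by
    have := Real.sum_le_exp_of_nonneg hd (n + 1)
    rw [Nat.range_succ_eq_Icc_zero, ← Finset.Ioc_insert_left (Nat.zero_le n),
      Finset.sum_insert (by simp)] at this
    simp only [pow_zero, Nat.factorial_zero, Nat.cast_one, div_one] at this
    linarith
  calc _ = ∑ k ∈ Finset.Ioc 0 n, ∑ p ∈ paths i j with p.length - 1 = k,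
        (d / n) ^ (p.length - 1) / (p.length - 1)! := (Finset.sum_fiberwise_of_maps_to hmaps _).symm
    _ ≤ ∑ k ∈ Finset.Ioc 0 n, d ^ k / k ! / n := Finset.sum_le_sum hfiber
    _ ≤ (exp d - 1) / n := by
        rw [← Finset.sum_div]
        gcongr

end Paths

section Network
variable {n : ℕ} {μ : Measure (Config n)} {i j : Fin n} {d : ℝ}

lemma setOf_netDist_le (hij : i ≠ j) (d : ℝ) :
    {ℓ : Config n | netDist ℓ i j ≤ d} =
      ⋃ p ∈ paths i j, {ℓ : Config n | listLen ℓ p ≤ d} := by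
  ext ℓ
  simp [netDist_le_iff ℓ hij]

lemma measurableSet_setOf_netDist_le (hij : i ≠ j) (d : ℝ) :
    MeasurableSet {ℓ : Config n | netDist ℓ i j ≤ d} := by
  rw [setOf_netDist_le hij]
  exact Finset.measurableSet_biUnion _ fun p _ =>
    measurableSet_le (measurable_listLen p) measurable_const

lemma measure_listLen_le (hμ : IsEdgeLaw n μ) {p : List (Fin n)} (hp : p.Nodup) (hd : 0 ≤ d) :
    μ {ℓ | listLen ℓ p ≤ d} ≤
      ENNReal.ofReal ((d / n) ^ (p.length - 1) / (p.length - 1)!) := by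
  have := hμ.1
  calc μ {ℓ | listLen ℓ p ≤ d}
      = μ {ℓ | ∑ e ∈ pathEdges p, ℓ e.1.1 e.1.2 ≤ d} := by
        refine measure_congr (Filter.eventuallyEq_set.2 ?_)
        filter_upwards [hμ.2.1] with ℓ hsym
        simp only [listLen_eq_sum_pathEdges hsym hp]
    _ ≤ erlangCDFBound (1 / n) (pathEdges p).card d :=
        measure_sum_le_erlangCDFBound
          (fun e => (measurable_pi_apply _).comp (measurable_pi_apply _))
          hμ.2.2.1 (by positivity) hμ.2.2.2 _ d
    _ = _ := by rw [erlangCDFBound, if_pos hd, card_pathEdges hp, one_div_mul_eq_div]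

lemma measure_netDist_le (hμ : IsEdgeLaw n μ) (hij : i ≠ j) (hd : 0 ≤ d) :
    μ {ℓ | netDist ℓ i j ≤ d} ≤ ENNReal.ofReal ((exp d - 1) / n) := by
  rw [setOf_netDist_le hij]
  calc _ ≤ ∑ p ∈ paths i j, μ {ℓ | listLen ℓ p ≤ d} := measure_biUnion_finset_le _ _
    _ ≤ ∑ p ∈ paths i j, ENNReal.ofReal ((d / n) ^ (p.length - 1) / (p.length - 1)!) :=
        Finset.sum_le_sum fun p hp => measure_listLen_le hμ (mem_paths.1 hp).1 hd
    _ = ENNReal.ofReal (∑ p ∈ paths i j, (d / n) ^ (p.length - 1) / (p.length - 1)!) :=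
        (ENNReal.ofReal_sum_of_nonneg fun p _ => by positivity).symm
    _ ≤ _ := ENNReal.ofReal_le_ofReal (sum_paths_le hij hd)

lemma measureReal_netDist_le (hμ : IsEdgeLaw n μ) (hij : i ≠ j) (hd : 0 ≤ d) :
    μ.real {ℓ | netDist ℓ i j ≤ d} ≤ exp d / (n - 1) := by
  have hn : (2 : ℝ) ≤ n := by
    have := Fin.val_ne_of_ne hij
    exact_mod_cast (by omega : 2 ≤ n)
  have hsub1 : 0 < (n : ℝ) - 1 := by linarith
  refine ENNReal.toReal_le_of_le_ofReal (by positivity) ((measure_netDist_le hμ hij hd).trans ?_)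
  refine ENNReal.ofReal_le_ofReal ?_
  rw [div_le_div_iff₀ (by positivity) hsub1]
  nlinarith [exp_pos d]

end Network

/-- **Lemma (LBCD).**  For disjoint `B, C ⊆ [n]` and `d > 0`, the expected number of ordered
pairs `(i,j) ∈ B × C` with `D(i,j) ≤ d` is at most `#B #C e^d / (n-1)`. -/
theorem expected_close_pairs_le (n : ℕ)
    (μ : Measure (Config n)) (hμ : IsEdgeLaw n μ)
    (B C : Finset (Fin n)) (hBC : Disjoint B C) (d : ℝ) (hd : 0 < d) :
    ∫ ℓ, (((B ×ˢ C).filter fun ij : Fin n × Fin n => netDist ℓ ij.1 ij.2 ≤ d).card : ℝ) ∂μ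
      ≤ (B.card : ℝ) * C.card * Real.exp d / ((n : ℝ) - 1) := by
  have := hμ.1
  have hne : ∀ ij ∈ B ×ˢ C, ij.1 ≠ ij.2 := fun ij hij h =>
    Finset.disjoint_left.1 hBC (Finset.mem_product.1 hij).1 (h ▸ (Finset.mem_product.1 hij).2)
  rw [integral_card_filter _ fun ij hij => measurableSet_setOf_netDist_le (hne ij hij) d]
  calc ∑ ij ∈ B ×ˢ C, μ.real {ℓ | netDist ℓ ij.1 ij.2 ≤ d}
      ≤ ∑ ij ∈ B ×ˢ C, exp d / (n - 1) :=
        Finset.sum_le_sum fun ij hij => measureReal_netDist_le hμ (hne ij hij) hd.le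
    _ = _ := by
        rw [Finset.sum_const, Finset.card_product, nsmul_eq_mul]
        push_cast
        ring

end EdgeFlows
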